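/- arXiv:1103.5772 — 11 statements merged into one kernel-verified Lean document; each statement's English description precedes it below -/
import Mathlib

section
/- Let n ≥ 2 and let x_1, x_2, …, x_n be pairwise distinct complex roots of the algebraic equation x^n = a_1 x^{n-1} + a_2 x^{n-2} + … + a_n (with complex coefficients a_1, …, a_n and a_n ≠ 0). Suppose x_1 is real and |x_1| > |x_i| for every i ≥ 2. Then the ratio p_m(x_1,…,x_n) / p_{m-1}(x_1,…,x_n) of consecutive complete homogeneous symmetric polynomials of the roots tends to x_1 as m → ∞ (in particular p_{m-1}(x_1,…,x_n) ≠ 0 for all sufficiently large m). -/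
open Filter

/-- The complete homogeneous symmetric polynomial of degree `m` in the
variables `x 0, …, x (n-1)`:  `p_m = Σ_{α_1+…+α_n = m} x_1^{α_1} ⋯ x_n^{α_n}`. -/
noncomputable def completeHomog {R : Type*} [CommSemiring R] (n m : ℕ) (x : Fin n → R) : R :=
  ∑ α ∈ Finset.Nat.antidiagonalTuple n m, ∏ i, x i ^ α i

/-!
For distinct nodes `x 0, …, x n` one has the divided-difference formula
`p_m(x) = ∑ i, w i * x i ^ (n + m)` with the barycentric weights
`w i = ∏ j ≠ i, (x i - x j)⁻¹` (`Lagrange.nodalWeight`). It follows by induction from the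
recurrence `p_{m+1}(x) = p_{m+1}(x 1, …, x n) + x 0 * p_m(x)`, which the right-hand side
satisfies because `w i * (x i - x 0)` is the weight of `x i` among the nodes `x 1, …, x n`;
the case `m = 0` is Lagrange's formula for the leading coefficient of `X ^ n`.
Hence `p_m` is an exponential sum `∑ i, c i * x i ^ m` with `c 0 = w 0 * x 0 ^ n ≠ 0`,
and the dominant term `c 0 * x 0 ^ m` governs the ratio of consecutive terms.
-/

open Finset Lagrange Topology

section CompleteHomog

variable {R : Type*} [CommSemiring R]

theorem completeHomog_succ (n m : ℕ) (x : Fin (n + 1) → R) :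
    completeHomog (n + 1) m x =
      ∑ p ∈ antidiagonal m, x 0 ^ p.1 * completeHomog n p.2 (Fin.tail x) := by
  -- `antidiagonalTuple (n + 1) m` is defined by consing `p.1` onto `antidiagonalTuple n p.2`
  simp only [completeHomog, Finset.sum, Nat.antidiagonalTuple, Multiset.Nat.antidiagonalTuple,
    List.Nat.antidiagonalTuple, Multiset.map_coe, Multiset.sum_coe, List.map_flatMap, List.map_map]
  simp only [List.flatMap, Fin.prod_univ_succ, Function.comp_def, Fin.cons_zero, Fin.cons_succ,
    List.sum_flatten, List.map_map, List.sum_map_mul_left, Fin.tail, sum_map_val]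
  rfl

theorem completeHomog_succ_succ (n m : ℕ) (x : Fin (n + 1) → R) :
    completeHomog (n + 1) (m + 1) x =
      completeHomog n (m + 1) (Fin.tail x) + x 0 * completeHomog (n + 1) m x := by
  rw [completeHomog_succ, completeHomog_succ, Nat.sum_antidiagonal_succ, mul_sum]
  simp [pow_succ', mul_assoc]

@[simp]
theorem completeHomog_zero_right (n : ℕ) (x : Fin n → R) : completeHomog n 0 x = 1 := by
  simp [completeHomog, Nat.antidiagonalTuple_zero_right]

end CompleteHomog

section DividedDifference

variable {K : Type*} [Field K]

theorem nodalWeight_succ {n : ℕ} (x : Fin (n + 1) → K) (j : Fin n) :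
    nodalWeight univ x j.succ = (x j.succ - x 0)⁻¹ * nodalWeight univ (Fin.tail x) j := by
  rw [nodalWeight, nodalWeight, Fin.univ_succ, erase_cons_of_ne _ (Fin.succ_ne_zero j).symm,
    prod_cons]
  erw [← map_erase, prod_map]
  rfl

theorem sum_nodalWeight_mul_pow_self {n : ℕ} {x : Fin (n + 1) → K} (hx : Function.Injective x) :
    ∑ i, nodalWeight univ x i * x i ^ n = 1 := by
  have := leadingCoeff_eq_sum (s := univ) hx.injOn (P := Polynomial.X ^ n) (by simp)
  simpa [nodalWeight, div_eq_mul_inv, mul_comm] using this.symm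

theorem sum_nodalWeight_mul_pow_succ {n : ℕ} {x : Fin (n + 1) → K} (hx : Function.Injective x)
    (k : ℕ) :
    ∑ i, nodalWeight univ x i * x i ^ (k + 1) =
      x 0 * ∑ i, nodalWeight univ x i * x i ^ k +
        ∑ j, nodalWeight univ (Fin.tail x) j * Fin.tail x j ^ k := by
  rw [← sub_eq_iff_eq_add', mul_sum, ← sum_sub_distrib, Fin.sum_univ_succ,
    show nodalWeight univ x 0 * x 0 ^ (k + 1) - x 0 * (nodalWeight univ x 0 * x 0 ^ k) = 0 by ring,
    zero_add]
  refine sum_congr rfl fun j _ => ?_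
  have hj : x j.succ - x 0 ≠ 0 := sub_ne_zero.2 (hx.ne (Fin.succ_ne_zero j))
  rw [nodalWeight_succ]
  simp only [Fin.tail]
  field_simp
  ring

theorem completeHomog_eq_sum_nodalWeight_mul_pow {n : ℕ} {x : Fin (n + 1) → K}
    (hx : Function.Injective x) (m : ℕ) :
    completeHomog (n + 1) m x = ∑ i, nodalWeight univ x i * x i ^ (n + m) := by
  induction n generalizing m with
  | zero => simp [completeHomog, nodalWeight]
  | succ n ih =>
    induction m with
    | zero => simpa using (sum_nodalWeight_mul_pow_self hx).symm
    | succ m ihm =>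
      rw [completeHomog_succ_succ, ihm, ih (x := Fin.tail x) (hx.comp (Fin.succ_injective _)),
        ← add_assoc, ← add_assoc, sum_nodalWeight_mul_pow_succ hx, Nat.add_right_comm n m 1,
        add_comm]

end DividedDifference

section DominantTerm

variable {𝕜 ι : Type*} [NormedField 𝕜] [Fintype ι] {x c : ι → 𝕜} {i₀ : ι}

theorem tendsto_sum_mul_pow_div_pow_of_dominant (h₀ : x i₀ ≠ 0)
    (hdom : ∀ i ≠ i₀, ‖x i‖ < ‖x i₀‖) :
    Tendsto (fun m : ℕ => (∑ i, c i * x i ^ m) / x i₀ ^ m) atTop (𝓝 (c i₀)) := by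
  classical
  have hterm : ∀ i, Tendsto (fun m : ℕ => c i * (x i / x i₀) ^ m) atTop
      (𝓝 (if i = i₀ then c i₀ else 0)) := by
    intro i
    by_cases hi : i = i₀
    · subst hi
      simp [div_self h₀]
    · have hlt : ‖x i / x i₀‖ < 1 := by
        rw [norm_div, div_lt_one (norm_pos_iff.2 h₀)]
        exact hdom i hi
      simpa [hi] using (tendsto_pow_atTop_nhds_zero_of_norm_lt_one hlt).const_mul (c i)
  simpa [sum_div, div_pow, mul_div_assoc] using tendsto_finsetSum univ fun i _ => hterm i

theorem eventually_ne_zero_and_tendsto_div_of_dominant (h₀ : x i₀ ≠ 0) (hc : c i₀ ≠ 0)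
    (hdom : ∀ i ≠ i₀, ‖x i‖ < ‖x i₀‖) :
    (∀ᶠ m in atTop, ∑ i, c i * x i ^ m ≠ 0) ∧
      Tendsto (fun m : ℕ => (∑ i, c i * x i ^ (m + 1)) / ∑ i, c i * x i ^ m) atTop (𝓝 (x i₀)) := by
  have hlim := tendsto_sum_mul_pow_div_pow_of_dominant (c := c) h₀ hdom
  have hne := hlim.eventually_ne hc
  refine ⟨hne.mono fun m hm => (div_ne_zero_iff.1 hm).1, ?_⟩
  have hratio := ((hlim.comp (tendsto_add_atTop_nat 1)).div hlim hc).const_mul (x i₀)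
  rw [div_self hc, mul_one] at hratio
  refine hratio.congr' (hne.mono fun m hm => ?_)
  have hs := (div_ne_zero_iff.1 hm).1
  simp only [Function.comp_apply, Pi.div_apply]
  field_simp
  ring

end DominantTerm

theorem ratio_completeHomog_tendsto_dominant_root
    (n : ℕ) (hn : 2 ≤ n) (x : Fin n → ℂ)
    (hinj : Function.Injective x)
    (hdom : ∀ i, i ≠ ⟨0, by omega⟩ → ‖x i‖ < ‖x ⟨0, by omega⟩‖) :
    (∀ᶠ m in atTop, completeHomog n m x ≠ 0) ∧
      Tendsto (fun m : ℕ => completeHomog n (m + 1) x / completeHomog n m x)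
        atTop (nhds (x ⟨0, by omega⟩)) := by
  obtain ⟨N, rfl⟩ : ∃ N, n = N + 1 := ⟨n - 1, by omega⟩
  simp only [Fin.mk_zero] at hdom ⊢
  have hx₀ : x 0 ≠ 0 :=
    norm_pos_iff.1 ((norm_nonneg _).trans_lt (hdom ⟨1, by omega⟩ (by simp [Fin.ext_iff])))
  have hc : nodalWeight univ x 0 * x 0 ^ N ≠ 0 :=
    mul_ne_zero (nodalWeight_ne_zero hinj.injOn (mem_univ _)) (pow_ne_zero _ hx₀)
  have hsum : ∀ m, completeHomog (N + 1) m x = ∑ i, nodalWeight univ x i * x i ^ N * x i ^ m := by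
    simp [completeHomog_eq_sum_nodalWeight_mul_pow hinj, pow_add, mul_assoc]
  simp only [hsum]
  exact eventually_ne_zero_and_tendsto_div_of_dominant hx₀ hc hdom
end

section
/- Let n ≥ 2 and let a_1, …, a_n be real numbers, a_n ≠ 0, such that the polynomial x^n − a_1 x^{n−1} − a_2 x^{n−2} − … − a_n has n pairwise distinct complex roots. Define the sequence (P_m) by P_0 = 1, P_m = 0 for −n+1 ≤ m < 0, and P_m = a_1 P_{m−1} + a_2 P_{m−2} + … + a_n P_{m−n} for m ≥ 1. If the ratios P_m / P_{m−1} converge to a nonzero real number x as m → ∞, then x is a root of x^n = a_1 x^{n−1} + a_2 x^{n−2} + … + a_n, and |x| is strictly greater than the modulus of every other complex root of this equation. -/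
/-!
For distinct characteristic roots `z i`, Lagrange interpolation of the initial values gives
`P m = ∑ i, d i * z i ^ m` for `m ≥ 0`, with `d i = z i ^ (n - 1) / ∏ j ≠ i, (z i - z j)`,
which is nonzero whenever `z i` is. Divide by the `m`-th power of a root of maximal modulus:
the normalized sequence `v` is bounded, so if `v (m + 1) / v m → σ` then
`v (m + 1) - σ * v m = ∑ i, d i * (w i - σ) * w i ^ m` tends to zero. In a null exponential sum
whose frequencies have modulus at most one, the frequencies of modulus one carry zero weight
(eliminate them one at a time by the same difference trick), so every root of maximal modulus
equals the limit `x`.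
-/

open Filter Finset Polynomial Topology

theorem Lagrange.sum_pow_div_prod_sub {K ι : Type*} [Field K] [Fintype ι] [DecidableEq ι]
    {z : ι → K} (hz : Function.Injective z) {k : ℕ} (hk : k < Fintype.card ι) :
    ∑ i, z i ^ k / ∏ j ∈ univ.erase i, (z i - z j) =
      if k = Fintype.card ι - 1 then 1 else 0 := by
  have hdeg : (X ^ k : K[X]).degree < #(univ : Finset ι) := by
    rw [degree_X_pow, card_univ]; exact_mod_cast hk
  have := Lagrange.coeff_eq_sum hz.injOn hdeg
  simp only [eval_pow, eval_X, coeff_X_pow, card_univ] at this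
  rw [← this]
  exact if_congr eq_comm rfl rfl

namespace LinearRecurrence

theorem exists_eq_of_isRoot_charPoly {R : Type*} [CommRing R] [IsDomain R] (E : LinearRecurrence R)
    {z : Fin E.order → R} (hz : Function.Injective z) (hroot : ∀ i, E.charPoly.IsRoot (z i))
    {w : R} (hw : E.charPoly.IsRoot w) : ∃ i, z i = w := by
  classical
  have hroots : E.charPoly.roots = (univ.image z).val := by
    refine roots_eq_of_degree_eq_card (fun x hx => ?_) ?_
    · obtain ⟨i, -, rfl⟩ := mem_image.1 hx
      exact hroot i
    · rw [card_image_of_injective _ hz, card_univ, Fintype.card_fin, charPoly_degree_eq_order]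
  have hmem : w ∈ E.charPoly.roots := (mem_roots E.charPoly_monic.ne_zero).2 hw
  simpa [hroots] using hmem

theorem eq_sum_pow_div_prod_sub {K : Type*} [Field K] (E : LinearRecurrence K)
    {z : Fin E.order → K} (hz : Function.Injective z) (hroot : ∀ i, E.charPoly.IsRoot (z i))
    {u : ℕ → K} (hu : E.IsSolution u)
    (hinit : ∀ k < E.order, u k = if k = E.order - 1 then 1 else 0) (k : ℕ) :
    u k = ∑ i, z i ^ k / ∏ j ∈ univ.erase i, (z i - z j) := by
  have hsol : E.IsSolution fun k => ∑ i, z i ^ k / ∏ j ∈ univ.erase i, (z i - z j) := by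
    rw [is_sol_iff_mem_solSpace]
    convert E.solSpace.sum_mem (t := univ) fun i _ =>
      E.solSpace.smul_mem (∏ j ∈ univ.erase i, (z i - z j))⁻¹
        ((E.is_sol_iff_mem_solSpace _).1 ((geom_sol_iff_root_charPoly E _).2 (hroot i))) using 1
    ext k
    simp [Finset.sum_apply, div_eq_inv_mul]
  refine congrFun ((E.eq_iff_eqOn_range_order _ _ hu hsol).2 fun k hk => ?_) k
  have hk : k < E.order := mem_range.1 hk
  dsimp only
  rw [hinit k hk, Lagrange.sum_pow_div_prod_sub hz (by simpa using hk), Fintype.card_fin]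

-- The recurrence `u m = ∑ j, a j * u (m - (j + 1))`, in Mathlib's convention
-- `u (k + n) = ∑ i, coeffs i * u (k + i)`.
def ofLagCoeffs {R : Type*} [CommSemiring R] {n : ℕ} (a : Fin n → R) : LinearRecurrence R :=
  ⟨n, fun i => a (Fin.rev i)⟩

theorem isRoot_charPoly_ofLagCoeffs_iff {R : Type*} [CommRing R] {n : ℕ} (a : Fin n → R)
    (q : R) :
    (ofLagCoeffs a).charPoly.IsRoot q ↔ q ^ n = ∑ j, a j * q ^ (n - 1 - (j : ℕ)) := by
  have hrev : ∑ i : Fin n, a i.rev * q ^ (i : ℕ) = ∑ j, a j * q ^ (n - 1 - (j : ℕ)) :=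
    Fintype.sum_equiv Fin.revPerm _ _ fun i => by
      rw [Fin.revPerm_apply, Fin.val_rev]; congr 2; omega
  rw [IsRoot.def, charPoly, eval_sub, eval_finsetSum, sub_eq_zero]
  simp only [eval_monomial, one_mul]
  exact iff_of_eq (congrArg (q ^ n = ·) hrev)

theorem isSolution_ofLagCoeffs {R : Type*} [CommSemiring R] {n : ℕ} {a : Fin n → R}
    {u : ℤ → R} {s : ℤ} (h : ∀ m ≥ s + n, u m = ∑ j, a j * u (m - ((j : ℕ) + 1))) :
    (ofLagCoeffs a).IsSolution fun k => u (k + s) := by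
  intro k
  show u ((k + n : ℕ) + s) = ∑ i : Fin n, a i.rev * u ((k + i : ℕ) + s)
  rw [h _ (by omega)]
  refine Fintype.sum_equiv Fin.revPerm _ _ fun j => ?_
  rw [Fin.revPerm_apply, Fin.rev_rev, Fin.val_rev]
  congr 2
  omega

end LinearRecurrence

section ExponentialSums

variable {𝕜 ι : Type*} [NormedField 𝕜]

theorem eq_zero_of_tendsto_sum_mul_pow [DecidableEq ι] {s : Finset ι} {w : ι → 𝕜}
    (hw : ∀ i ∈ s, 1 ≤ ‖w i‖) (hinj : Set.InjOn w s) {d : ι → 𝕜}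
    (h : Tendsto (fun m => ∑ i ∈ s, d i * w i ^ m) atTop (𝓝 0)) : ∀ i ∈ s, d i = 0 := by
  induction s using Finset.induction_on generalizing d with
  | empty => simp
  | insert k s hk ih =>
    have hw' : ∀ i ∈ s, 1 ≤ ‖w i‖ := fun i hi => hw i (mem_insert_of_mem hi)
    have hinj' : Set.InjOn w s := hinj.mono (by simp)
    -- subtracting `w k` times the sum from its shift eliminates the frequency `w k`
    have hdiff : Tendsto (fun m => ∑ i ∈ s, d i * (w i - w k) * w i ^ m) atTop (𝓝 0) := by
      have := (h.comp (tendsto_add_atTop_nat 1)).sub (h.const_mul (w k))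
      rw [mul_zero, sub_zero] at this
      refine this.congr fun m => ?_
      simp only [Function.comp_apply, sum_insert hk, mul_add, mul_sum]
      rw [add_sub_add_comm, ← sum_sub_distrib]
      ring_nf
    have hs : ∀ i ∈ s, d i = 0 := fun i hi =>
      (mul_eq_zero.1 (ih hw' hinj' hdiff i hi)).resolve_right <| sub_ne_zero.2 fun hik =>
        hk (hinj (mem_insert_of_mem hi) (mem_insert_self k s) hik ▸ hi)
    have hk0 : d k = 0 := by
      have hnorm := (continuous_norm.tendsto _).comp h
      rw [norm_zero] at hnorm
      refine norm_le_zero_iff.1 (ge_of_tendsto' hnorm fun m => ?_)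
      have hrest : ∑ i ∈ s, d i * w i ^ m = 0 :=
        sum_eq_zero fun i hi => by rw [hs i hi, zero_mul]
      rw [Function.comp_apply, sum_insert hk, hrest, add_zero, norm_mul, norm_pow]
      exact le_mul_of_one_le_right (norm_nonneg _) (one_le_pow₀ (hw k (mem_insert_self k s)))
    intro i hi
    rcases mem_insert.1 hi with rfl | hi
    exacts [hk0, hs i hi]

theorem eq_zero_of_tendsto_sum_mul_pow_of_norm_le_one [Fintype ι] {w d : ι → 𝕜}
    (hw : ∀ i, ‖w i‖ ≤ 1) (hinj : Function.Injective w)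
    (h : Tendsto (fun m => ∑ i, d i * w i ^ m) atTop (𝓝 0)) {i : ι} (hi : ‖w i‖ = 1) :
    d i = 0 := by
  classical
  have hsmall :
      Tendsto (fun m => ∑ j ∈ univ.filter (‖w ·‖ ≠ 1), d j * w j ^ m) atTop (𝓝 0) := by
    simpa using tendsto_finsetSum _ fun j hj => (tendsto_pow_atTop_nhds_zero_of_norm_lt_one
      ((hw j).lt_of_ne (mem_filter.1 hj).2)).const_mul (d j)
  have hunit :
      Tendsto (fun m => ∑ j ∈ univ.filter (‖w ·‖ = 1), d j * w j ^ m) atTop (𝓝 0) := by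
    refine (sub_zero (0 : 𝕜) ▸ h.sub hsmall).congr fun m => ?_
    rw [← sum_filter_add_sum_filter_not univ (‖w ·‖ = 1), add_sub_cancel_right]
  exact eq_zero_of_tendsto_sum_mul_pow (fun j hj => (mem_filter.1 hj).2.ge) hinj.injOn hunit i
    (mem_filter.2 ⟨mem_univ i, hi⟩)

theorem eq_of_tendsto_div_of_norm_le_one [Fintype ι] {w d : ι → 𝕜}
    (hw : ∀ i, ‖w i‖ ≤ 1) (hinj : Function.Injective w) {σ : 𝕜}
    (hne : ∀ᶠ m in atTop, ∑ i, d i * w i ^ m ≠ 0)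
    (hlim : Tendsto (fun m => (∑ i, d i * w i ^ (m + 1)) / ∑ i, d i * w i ^ m) atTop (𝓝 σ))
    {i : ι} (hi : ‖w i‖ = 1) (hdi : d i ≠ 0) : w i = σ := by
  set v : ℕ → 𝕜 := fun m => ∑ i, d i * w i ^ m with hv_def
  have hbdd : IsBoundedUnder (· ≤ ·) atTop (norm ∘ v) := by
    refine isBoundedUnder_of ⟨∑ i, ‖d i‖, fun m => (norm_sum_le _ _).trans ?_⟩
    refine sum_le_sum fun i _ => ?_
    rw [norm_mul, norm_pow]
    exact mul_le_of_le_one_right (norm_nonneg _) (pow_le_one₀ (norm_nonneg _) (hw i))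
  -- `v (m + 1) - σ * v m = (v (m + 1) / v m - σ) * v m` is null, as `v` is bounded
  have hdiff : Tendsto (fun m => ∑ i, d i * (w i - σ) * w i ^ m) atTop (𝓝 0) := by
    refine ((sub_self σ ▸ hlim.sub_const σ).zero_mul_isBoundedUnder_le hbdd).congr' ?_
    filter_upwards [hne] with m hm
    rw [sub_mul, div_mul_cancel₀ _ hm, hv_def, mul_sum, ← sum_sub_distrib]
    exact sum_congr rfl fun i _ => by ring
  exact sub_eq_zero.1 <| (mul_eq_zero.1 <|
    eq_zero_of_tendsto_sum_mul_pow_of_norm_le_one hw hinj hdiff hi).resolve_left hdi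

theorem exists_eq_and_norm_lt_of_tendsto_div [Fintype ι] {z d : ι → 𝕜}
    (hz : Function.Injective z) (hd : ∀ i, z i ≠ 0 → d i ≠ 0) {ρ : 𝕜} (hρ : ρ ≠ 0)
    (hlim : Tendsto (fun m => (∑ i, d i * z i ^ (m + 1)) / ∑ i, d i * z i ^ m) atTop (𝓝 ρ)) :
    ∃ i, z i = ρ ∧ ∀ j ≠ i, ‖z j‖ < ‖z i‖ := by
  have hne : ∀ᶠ m in atTop, ∑ i, d i * z i ^ m ≠ 0 :=
    (hlim.eventually_ne hρ).mono fun m hm h0 => hm (by rw [h0, div_zero])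
  obtain ⟨m₀, hm₀, hm₀pos⟩ := (hne.and (eventually_gt_atTop 0)).exists
  obtain ⟨i₁, -, hi₁⟩ := exists_ne_zero_of_sum_ne_zero hm₀
  obtain ⟨i₀, -, hmax⟩ := exists_max_image univ (‖z ·‖) ⟨i₁, mem_univ i₁⟩
  have hz₁ : z i₁ ≠ 0 := ne_zero_pow hm₀pos.ne' (right_ne_zero_of_mul hi₁)
  have hz₀ : z i₀ ≠ 0 :=
    norm_pos_iff.1 <| (norm_pos_iff.2 hz₁).trans_le (hmax i₁ (mem_univ i₁))
  set w : ι → 𝕜 := fun i => z i / z i₀ with hw_def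
  have hw_le : ∀ i, ‖w i‖ ≤ 1 := fun i => by
    rw [hw_def, norm_div]
    exact div_le_one_of_le₀ (hmax i (mem_univ i)) (norm_nonneg _)
  have hsum : ∀ m, ∑ i, d i * w i ^ m = (∑ i, d i * z i ^ m) / z i₀ ^ m := fun m => by
    simp only [hw_def, div_pow, mul_div_assoc, sum_div]
  have hwne : ∀ᶠ m in atTop, ∑ i, d i * w i ^ m ≠ 0 :=
    hne.mono fun m hm => by rw [hsum]; exact div_ne_zero hm (pow_ne_zero _ hz₀)
  have hwlim : Tendsto (fun m => (∑ i, d i * w i ^ (m + 1)) / ∑ i, d i * w i ^ m) atTop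
      (𝓝 (ρ / z i₀)) := by
    refine (hlim.div_const (z i₀)).congr' (hne.mono fun m hm => ?_)
    dsimp only
    rw [hsum, hsum, pow_succ]
    field_simp
  have hdom : ∀ i, ‖z i‖ = ‖z i₀‖ → z i = ρ := fun i hi => by
    have hzi : z i ≠ 0 := norm_ne_zero_iff.1 (hi ▸ norm_ne_zero_iff.2 hz₀)
    have hwi : ‖w i‖ = 1 := by rw [hw_def, norm_div, hi, div_self (norm_ne_zero_iff.2 hz₀)]
    exact (div_left_inj' hz₀).1 <|
      eq_of_tendsto_div_of_norm_le_one hw_le (fun i j h => hz ((div_left_inj' hz₀).1 h)) hwne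
        hwlim hwi (hd i hzi)
  refine ⟨i₀, hdom i₀ rfl, fun j hj => (hmax j (mem_univ j)).lt_of_ne fun h => ?_⟩
  exact hj (hz ((hdom j h).trans (hdom i₀ rfl).symm))

end ExponentialSums

theorem eq_sum_mul_pow_of_recurrence {K : Type*} [Field K] {n : ℕ} (hn : 1 ≤ n)
    {a : Fin n → K} {z : Fin n → K} (hz : Function.Injective z)
    (hroot : ∀ i, z i ^ n = ∑ j, a j * z i ^ (n - 1 - (j : ℕ))) {u : ℤ → K} (h0 : u 0 = 1)
    (hneg : ∀ m : ℤ, 1 - (n : ℤ) ≤ m → m < 0 → u m = 0)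
    (hrec : ∀ m : ℤ, 1 ≤ m → u m = ∑ j, a j * u (m - ((j : ℕ) + 1))) (m : ℕ) :
    u m = ∑ i, z i ^ (n - 1) / (∏ j ∈ univ.erase i, (z i - z j)) * z i ^ m := by
  have hinit : ∀ k < n, u (k + (1 - n)) = if k = n - 1 then 1 else 0 := fun k hk => by
    by_cases hkn : k = n - 1
    · rw [if_pos hkn, show (k : ℤ) + (1 - n) = 0 by omega, h0]
    · rw [if_neg hkn, hneg _ (by omega) (by omega)]
  have hclosed : u ((m + (n - 1) : ℕ) + (1 - n)) =
      ∑ i, z i ^ (m + (n - 1)) / ∏ j ∈ univ.erase i, (z i - z j) :=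
    (LinearRecurrence.ofLagCoeffs a).eq_sum_pow_div_prod_sub hz
      (fun i => (LinearRecurrence.isRoot_charPoly_ofLagCoeffs_iff a (z i)).2 (hroot i))
      (LinearRecurrence.isSolution_ofLagCoeffs (s := 1 - n) fun m hm => hrec m (by omega))
      hinit (m + (n - 1))
  rw [show ((m + (n - 1) : ℕ) : ℤ) + (1 - n) = m by omega] at hclosed
  rw [hclosed]
  exact sum_congr rfl fun i _ => by ring

/-- If the polynomial `x^n - a_1 x^{n-1} - … - a_n` (with `a_n ≠ 0`) has `n` pairwise
distinct complex roots, and the ratios `P_m / P_{m-1}` of the recurrence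
`P_m = a_1 P_{m-1} + … + a_n P_{m-n}`, `P_0 = 1`, `P_m = 0` for `1-n ≤ m < 0`,
converge to a nonzero real `x`, then `x` is a root of the equation and its modulus
strictly exceeds the modulus of every other complex root. -/
theorem limit_of_recurrent_fraction_is_dominant_root
    (n : ℕ) (hn : 2 ≤ n) (a : Fin n → ℝ)
    (hdistinct : ∃ z : Fin n → ℂ, Function.Injective z ∧
      ∀ i, (z i) ^ n = ∑ j : Fin n, (a j : ℂ) * (z i) ^ (n - 1 - (j : ℕ)))
    (P : ℤ → ℝ)
    (hP0 : P 0 = 1)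
    (hPneg : ∀ m : ℤ, 1 - (n : ℤ) ≤ m → m < 0 → P m = 0)
    (hPrec : ∀ m : ℤ, 1 ≤ m → P m = ∑ j : Fin n, a j * P (m - ((j : ℕ) + 1)))
    (x : ℝ) (hx : x ≠ 0)
    (hlim : Tendsto (fun m : ℕ => P ((m : ℤ) + 1) / P (m : ℤ)) atTop (nhds x)) :
    x ^ n = (∑ j : Fin n, a j * x ^ (n - 1 - (j : ℕ))) ∧
      ∀ z : ℂ, (z ^ n = ∑ j : Fin n, (a j : ℂ) * z ^ (n - 1 - (j : ℕ))) →
        z ≠ (x : ℂ) → ‖z‖ < |x| := by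
  obtain ⟨z, hz, hroot⟩ := hdistinct
  set d : Fin n → ℂ := fun i => z i ^ (n - 1) / ∏ j ∈ univ.erase i, (z i - z j)
  have hP : ∀ m : ℕ, (P m : ℂ) = ∑ i, d i * z i ^ m :=
    eq_sum_mul_pow_of_recurrence (u := fun m => (P m : ℂ)) (by omega) hz hroot (by simp [hP0])
      (fun m h1 h2 => by simp [hPneg m h1 h2]) (fun m hm => by simp [hPrec m hm])
  have hd : ∀ i, z i ≠ 0 → d i ≠ 0 := fun i hi =>
    div_ne_zero (pow_ne_zero _ hi) <| prod_ne_zero_iff.2 fun j hj =>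
      sub_ne_zero.2 (hz.ne (ne_of_mem_erase hj).symm)
  have hlimC : Tendsto (fun m : ℕ => (∑ i, d i * z i ^ (m + 1)) / ∑ i, d i * z i ^ m) atTop
      (𝓝 (x : ℂ)) := by
    refine ((Complex.continuous_ofReal.tendsto x).comp hlim).congr fun m => ?_
    rw [Function.comp_apply, Complex.ofReal_div, ← hP, ← hP]
    push_cast
    rfl
  obtain ⟨i, hix, hmax⟩ :=
    exists_eq_and_norm_lt_of_tendsto_div hz hd (Complex.ofReal_ne_zero.2 hx) hlimC
  have hE := LinearRecurrence.isRoot_charPoly_ofLagCoeffs_iff fun j => (a j : ℂ)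
  refine ⟨by exact_mod_cast hix ▸ hroot i, fun w hw hwx => ?_⟩
  obtain ⟨j, rfl⟩ := LinearRecurrence.exists_eq_of_isRoot_charPoly _ hz
    (fun i => (hE _).2 (hroot i)) ((hE w).2 hw)
  calc ‖z j‖ < ‖z i‖ := hmax j fun hji => hwx (hji ▸ hix)
    _ = |x| := by rw [hix, Complex.norm_real, Real.norm_eq_abs]
end

section
/- Let n ≥ 1 and let m be a positive real number. Then the real number x = m^{n−1} + m^{n−2}·(m^n+1)^{1/n} + m^{n−3}·(m^n+1)^{2/n} + … + m·(m^n+1)^{(n−2)/n} + (m^n+1)^{(n−1)/n}, i.e. x = Σ_{i=0}^{n−1} m^{n−1−i} ((m^n+1)^{1/n})^i, satisfies the algebraic equation x^n = C(n,1) m^{n−1} x^{n−1} + C(n,2) m^{n−2} x^{n−2} + … + C(n,n−1) m x + C(n,n). -/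
/-! With `r = (m^n+1)^{1/n}`, the form is the geometric sum `x = Σ m^{n-1-i} r^i`, so
`x (r - m) = r^n - m^n = 1`, i.e. `r x = m x + 1`. Raising to the `n`-th power gives
`(m^n + 1) x^n = (m x + 1)^n`; expanding the right side binomially and cancelling `(m x)^n`
leaves `x^n = Σ_{k<n} C(n,k) (m x)^k`, which is the claimed equation after reindexing `k = n-1-i`. -/

open Finset

section CommRing

variable {R : Type*} [CommRing R]

theorem pow_eq_sum_choose_of_mul_eq_mul_add_one {r m x : R} {n : ℕ}
    (hrx : r * x = m * x + 1) (hr : r ^ n = m ^ n + 1) :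
    x ^ n = ∑ k ∈ range n, (n.choose k : R) * (m * x) ^ k := by
  have h : (m * x) ^ n + x ^ n = (m * x) ^ n + ∑ k ∈ range n, (n.choose k : R) * (m * x) ^ k :=
    calc (m * x) ^ n + x ^ n = (r * x) ^ n := by rw [mul_pow, mul_pow, hr]; ring
      _ = ∑ k ∈ range (n + 1), (m * x) ^ k * 1 ^ (n - k) * n.choose k := by rw [hrx, add_pow]
      _ = _ := by
        rw [sum_range_succ, Nat.choose_self, add_comm]
        simp only [one_pow, mul_one, Nat.cast_one, mul_comm]
  exact add_left_cancel h

theorem mul_geom_sum₂_eq_mul_add_one {r m : R} {n : ℕ} (hr : r ^ n = m ^ n + 1) :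
    r * ∑ i ∈ range n, m ^ (n - 1 - i) * r ^ i
      = m * ∑ i ∈ range n, m ^ (n - 1 - i) * r ^ i + 1 := by
  have h := geom_sum₂_mul r m n
  simp only [hr, add_sub_cancel_left, fun i => mul_comm (r ^ i)] at h
  linear_combination h

theorem sum_choose_succ_mul_pow_reflect (m x : R) (n : ℕ) :
    ∑ i ∈ range n, (n.choose (i + 1) : R) * m ^ (n - 1 - i) * x ^ (n - 1 - i)
      = ∑ k ∈ range n, (n.choose k : R) * (m * x) ^ k := by
  rw [← sum_range_reflect]
  refine sum_congr rfl fun i hi => ?_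
  have hi : i < n := mem_range.mp hi
  rw [mul_pow, show n - 1 - i + 1 = n - i by omega, show n - 1 - (n - 1 - i) = i by omega,
    Nat.choose_symm hi.le, mul_assoc]

theorem geom_sum₂_pow_eq_sum_choose {r m : R} {n : ℕ} (hr : r ^ n = m ^ n + 1) :
    (∑ i ∈ range n, m ^ (n - 1 - i) * r ^ i) ^ n
      = ∑ i ∈ range n, (n.choose (i + 1) : R) * m ^ (n - 1 - i) *
          (∑ t ∈ range n, m ^ (n - 1 - t) * r ^ t) ^ (n - 1 - i) := by
  rw [sum_choose_succ_mul_pow_reflect]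
  exact pow_eq_sum_choose_of_mul_eq_mul_add_one (mul_geom_sum₂_eq_mul_add_one hr) hr

end CommRing

/-- The `(n, m^n+1)`-form
`x = m^{n-1} + m^{n-2}(m^n+1)^{1/n} + … + m (m^n+1)^{(n-2)/n} + (m^n+1)^{(n-1)/n}`
satisfies `x^n = C(n,1) m^{n-1} x^{n-1} + C(n,2) m^{n-2} x^{n-2} + … + C(n,n)`. -/
theorem form_plus_satisfies_binomial_equation
    (n : ℕ) (hn : 1 ≤ n) (m : ℝ) (hm : 0 < m) :
    (∑ i ∈ Finset.range n,
        m ^ (n - 1 - i) * ((m ^ n + 1) ^ ((1 : ℝ) / (n : ℝ))) ^ i) ^ n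
      = ∑ i ∈ Finset.range n,
          (n.choose (i + 1) : ℝ) * m ^ (n - 1 - i) *
            (∑ t ∈ Finset.range n,
              m ^ (n - 1 - t) * ((m ^ n + 1) ^ ((1 : ℝ) / (n : ℝ))) ^ t) ^ (n - 1 - i) := by
  apply geom_sum₂_pow_eq_sum_choose
  rw [one_div]
  exact Real.rpow_inv_natCast_pow (by positivity) (by omega)
end

section
/- Let n ≥ 1 and let m be a real number with m^n > 1. Then the real number x = m^{n−1} + m^{n−2}·(m^n−1)^{1/n} + m^{n−3}·(m^n−1)^{2/n} + … + m·(m^n−1)^{(n−2)/n} + (m^n−1)^{(n−1)/n}, i.e. x = Σ_{i=0}^{n−1} m^{n−1−i} ((m^n−1)^{1/n})^i, satisfies the algebraic equation x^n = C(n,1) m^{n−1} x^{n−1} − C(n,2) m^{n−2} x^{n−2} + … + (−1)^{n−2} C(n,n−1) m x + (−1)^{n−1} C(n,n), i.e. x^n = Σ_{i=1}^{n} (−1)^{i−1} C(n,i) m^{n−i} x^{n−i}. -/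
/-!
Put `r = (m^n - 1)^{1/n}`, so `r^n = m^n - 1`. The form `x` is the geometric sum
`Σ m^{n-1-i} r^i`, hence `x (m - r) = m^n - r^n = 1`, i.e. `m x - 1 = r x`. Raising to the
`n`-th power gives `(m x - 1)^n = (m^n - 1) x^n`, that is `x^n = (m x)^n - (m x - 1)^n`, and the
binomial theorem expands the right-hand side into the claimed equation.
-/

open Finset

theorem pow_sub_sub_one_pow {R : Type*} [CommRing R] (y : R) (n : ℕ) :
    y ^ n - (y - 1) ^ n
      = ∑ i ∈ range n, (-1) ^ i * (n.choose (i + 1) : R) * y ^ (n - 1 - i) := by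
  have binomial := add_pow (-1) y n
  rw [sum_range_succ', neg_add_eq_sub] at binomial
  rw [binomial, pow_zero, one_mul, Nat.sub_zero, Nat.choose_zero_right, Nat.cast_one, mul_one,
    sub_add_cancel_right, ← sum_neg_distrib]
  refine sum_congr rfl fun i _ => ?_
  rw [show n - (i + 1) = n - 1 - i by omega, pow_succ]
  ring

theorem pow_eq_pow_sub_pow_of_geom_sum {R : Type*} [CommRing R] (n : ℕ) (m r : R)
    (hr : m ^ n - r ^ n = 1) :
    (∑ i ∈ range n, m ^ (n - 1 - i) * r ^ i) ^ n
      = (m * ∑ i ∈ range n, m ^ (n - 1 - i) * r ^ i) ^ n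
        - (m * ∑ i ∈ range n, m ^ (n - 1 - i) * r ^ i - 1) ^ n := by
  set x := ∑ i ∈ range n, m ^ (n - 1 - i) * r ^ i
  have hx : x * (r - m) = r ^ n - m ^ n := by
    simp only [x, mul_comm (m ^ _)]
    exact geom_sum₂_mul r m n
  have hmx : m * x - 1 = r * x := by linear_combination hr - hx
  rw [hmx, mul_pow, mul_pow]
  linear_combination (-x ^ n) * hr

theorem form_minus_satisfies_binomial_equation_general
    (n : ℕ) (m : ℝ) (hm : 1 < m ^ n) :
    (∑ i ∈ Finset.range n,
        m ^ (n - 1 - i) * ((m ^ n - 1) ^ ((1 : ℝ) / (n : ℝ))) ^ i) ^ n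
      = ∑ i ∈ Finset.range n,
          (-1 : ℝ) ^ i * (n.choose (i + 1) : ℝ) * m ^ (n - 1 - i) *
            (∑ t ∈ Finset.range n,
              m ^ (n - 1 - t) * ((m ^ n - 1) ^ ((1 : ℝ) / (n : ℝ))) ^ t) ^ (n - 1 - i) := by
  have hn : n ≠ 0 := by rintro rfl; simp at hm
  set r := (m ^ n - 1) ^ ((1 : ℝ) / (n : ℝ))
  have hr : r ^ n = m ^ n - 1 := by
    simp only [r, one_div]
    exact Real.rpow_inv_natCast_pow (by linarith) hn
  rw [pow_eq_pow_sub_pow_of_geom_sum n m r (by rw [hr]; ring), pow_sub_sub_one_pow]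
  refine sum_congr rfl fun i _ => ?_
  ring

/-- The `(n, m^n-1)`-form
`x = m^{n-1} + m^{n-2}(m^n-1)^{1/n} + … + m (m^n-1)^{(n-2)/n} + (m^n-1)^{(n-1)/n}`
satisfies `x^n = Σ_{i=1}^{n} (-1)^{i-1} C(n,i) m^{n-i} x^{n-i}`. -/
theorem form_minus_satisfies_binomial_equation
    (n : ℕ) (hn : 1 ≤ n) (m : ℝ) (hm : 1 < m ^ n) :
    (∑ i ∈ Finset.range n,
        m ^ (n - 1 - i) * ((m ^ n - 1) ^ ((1 : ℝ) / (n : ℝ))) ^ i) ^ n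
      = ∑ i ∈ Finset.range n,
          (-1 : ℝ) ^ i * (n.choose (i + 1) : ℝ) * m ^ (n - 1 - i) *
            (∑ t ∈ Finset.range n,
              m ^ (n - 1 - t) * ((m ^ n - 1) ^ ((1 : ℝ) / (n : ℝ))) ^ t) ^ (n - 1 - i) :=
  form_minus_satisfies_binomial_equation_general n m hm
end

section
/- Let n ≥ 2 and let m be a positive real number. Set a_1 = C(n,1) m^{n−1} and a_i = C(n,i) m^{n−i} for i = 2, …, n, and define the sequence (P_k) by P_0 = 1, P_k = 0 for −n+1 ≤ k < 0, and P_k = a_1 P_{k−1} + a_2 P_{k−2} + … + a_n P_{k−n} for k ≥ 1. Then the ratios P_k / P_{k−1} converge, as k → ∞, to the (n, m^n+1)-form Σ_{i=0}^{n−1} m^{n−1−i} ((m^n+1)^{1/n})^i. -/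
/-!
The recurrence has characteristic equation `(m q + 1) ^ n = (m ^ n + 1) q ^ n`, whose roots are
`q_j = (β ζ ^ j - m)⁻¹` with `β = (m ^ n + 1) ^ (1 / n)` and `ζ` a primitive `n`-th root of unity.
Since `|β - m| < |β ζ ^ j - m|` for `ζ ^ j ≠ 1`, the real root `q_0 = (β - m)⁻¹` strictly dominates,
and partial fractions show that it occurs with a nonzero weight in the solution with the given
initial values. Hence `P (k + 1) / P k → (β - m)⁻¹`, which is the geometric sum
`∑ m ^ (n - 1 - i) β ^ i` because `β ^ n - m ^ n = 1`.
-/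

open Filter Finset Topology

section DominantTerm

variable {𝕜 ι : Type*} [NormedField 𝕜] {s : Finset ι} {j₀ : ι}

lemma tendsto_sum_mul_pow_of_norm_lt_one (b ρ : ι → 𝕜) (hj₀ : j₀ ∈ s) (hρ₀ : ρ j₀ = 1)
    (hρ : ∀ j ∈ s, j ≠ j₀ → ‖ρ j‖ < 1) :
    Tendsto (fun k : ℕ => ∑ j ∈ s, b j * ρ j ^ k) atTop (𝓝 (b j₀)) := by
  classical
  have hterm : ∀ j ∈ s, Tendsto (fun k : ℕ => b j * ρ j ^ k) atTop
      (𝓝 (if j = j₀ then b j₀ else 0)) := by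
    intro j hj
    split_ifs with h
    · subst h
      simp [hρ₀]
    · simpa using (tendsto_pow_atTop_nhds_zero_of_norm_lt_one (hρ j hj h)).const_mul (b j)
  simpa [hj₀] using tendsto_finsetSum s hterm

lemma tendsto_sum_mul_pow_succ_div_sum_mul_pow (c r : ι → 𝕜) (hj₀ : j₀ ∈ s) (hc : c j₀ ≠ 0)
    (hr : r j₀ ≠ 0) (hdom : ∀ j ∈ s, j ≠ j₀ → ‖r j‖ < ‖r j₀‖) :
    Tendsto (fun k : ℕ => (∑ j ∈ s, c j * r j ^ (k + 1)) / ∑ j ∈ s, c j * r j ^ k) atTop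
      (𝓝 (r j₀)) := by
  have hρ : ∀ j ∈ s, j ≠ j₀ → ‖r j / r j₀‖ < 1 := fun j hj hne => by
    rw [norm_div, div_lt_one (norm_pos_iff.2 hr)]
    exact hdom j hj hne
  have hnum := tendsto_sum_mul_pow_of_norm_lt_one (fun j => c j * r j) _ hj₀ (div_self hr) hρ
  have hden := tendsto_sum_mul_pow_of_norm_lt_one c _ hj₀ (div_self hr) hρ
  have hlim := hnum.div hden hc
  rw [mul_div_cancel_left₀ _ hc] at hlim
  refine hlim.congr fun k => ?_
  have hscale (b : ι → 𝕜) :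
      ∑ j ∈ s, b j * (r j / r j₀) ^ k = (∑ j ∈ s, b j * r j ^ k) / r j₀ ^ k := by
    simp only [div_pow, sum_div, mul_div_assoc]
  rw [Pi.div_apply, hscale, hscale, div_div_div_cancel_right₀ (pow_ne_zero k hr)]
  simp only [pow_succ, mul_assoc, mul_comm (r _)]

end DominantTerm

lemma abs_sub_lt_norm_mul_sub {b m : ℝ} (hb : 0 < b) (hm : 0 < m) {z : ℂ} (hz : ‖z‖ = 1)
    (hz1 : z ≠ 1) : |b - m| < ‖b * z - m‖ := by
  have hz' : z.re ^ 2 + z.im ^ 2 = 1 := by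
    have h := Complex.sq_norm z
    rw [hz, Complex.normSq_apply] at h
    linear_combination -h
  have hsq : ‖b * z - m‖ ^ 2 = (b - m) ^ 2 + b * m * ‖z - 1‖ ^ 2 := by
    simp only [Complex.sq_norm, Complex.normSq_apply, Complex.sub_re, Complex.sub_im,
      Complex.mul_re, Complex.mul_im, Complex.ofReal_re, Complex.ofReal_im, Complex.one_re,
      Complex.one_im]
    linear_combination (b ^ 2 - b * m) * hz'
  refine abs_lt_of_sq_lt_sq ?_ (norm_nonneg _)
  rw [hsq, lt_add_iff_pos_right]
  have := norm_pos_iff.2 (sub_ne_zero.2 hz1)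
  positivity

section Field

variable {K : Type*} [Field K] {n : ℕ} {ζ β m : K}

lemma sub_ne_zero_of_pow_eq_pow_add_one {u : K} (hu : u ^ n = m ^ n + 1) : u - m ≠ 0 := by
  rintro h
  rw [sub_eq_zero.1 h] at hu
  simp at hu

lemma mul_pow_pow_eq_pow (hζ : ζ ^ n = 1) (β : K) (j : ℕ) : (β * ζ ^ j) ^ n = β ^ n := by
  rw [mul_pow, ← pow_mul, mul_comm j n, pow_mul, hζ, one_pow, mul_one]

lemma mul_pow_sub_ne_zero (hζ : ζ ^ n = 1) (hβ : β ^ n = m ^ n + 1) (j : ℕ) :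
    β * ζ ^ j - m ≠ 0 :=
  sub_ne_zero_of_pow_eq_pow_add_one (by rw [mul_pow_pow_eq_pow hζ, hβ])

lemma sum_range_pow_mul_pow_eq_inv_sub (hβ : β ^ n = m ^ n + 1) :
    ∑ i ∈ range n, m ^ (n - 1 - i) * β ^ i = (β - m)⁻¹ := by
  refine (inv_eq_of_mul_eq_one_left ?_).symm
  simp_rw [mul_comm (m ^ _)]
  rw [geom_sum₂_mul, hβ, add_sub_cancel_left]

lemma IsPrimitiveRoot.sum_mul_pow_pow_eq_zero (hζ : IsPrimitiveRoot ζ n) (β : K) {p : ℕ}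
    (hp : 0 < p) (hpn : p < n) : ∑ j ∈ range n, (β * ζ ^ j) ^ p = 0 := by
  have hζp : (ζ ^ p) ^ n = 1 := by rw [← pow_mul, mul_comm, pow_mul, hζ.pow_eq_one, one_pow]
  simp_rw [mul_pow, ← pow_mul, mul_comm _ p, pow_mul, ← mul_sum]
  rw [geom_sum_eq (hζ.pow_ne_one_of_pos_of_lt hp.ne' hpn), hζp, sub_self, zero_div, mul_zero]

lemma IsPrimitiveRoot.sum_mul_mul_sub_pow_eq_zero (hζ : IsPrimitiveRoot ζ n) (β m : K) {r : ℕ}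
    (hr : r + 2 ≤ n) : ∑ j ∈ range n, β * ζ ^ j * (β * ζ ^ j - m) ^ r = 0 := by
  simp_rw [sub_eq_add_neg, add_pow, mul_sum, ← mul_assoc, ← pow_succ']
  rw [sum_comm]
  refine sum_eq_zero fun s hs => ?_
  rw [← sum_mul, ← sum_mul, hζ.sum_mul_pow_pow_eq_zero β s.succ_pos (by grind), zero_mul,
    zero_mul]

lemma IsPrimitiveRoot.sum_mul_mul_sub_inv (hζ : IsPrimitiveRoot ζ n) (hβ : β ^ n = m ^ n + 1) :
    ∑ j ∈ range n, β * ζ ^ j * (β * ζ ^ j - m)⁻¹ = n * β ^ n := by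
  have hpow := mul_pow_pow_eq_pow hζ.pow_eq_one β
  have hinv (j : ℕ) : (β * ζ ^ j - m)⁻¹ = ∑ s ∈ range n, (β * ζ ^ j) ^ s * m ^ (n - 1 - s) := by
    refine inv_eq_of_mul_eq_one_left ?_
    rw [geom_sum₂_mul, hpow, hβ, add_sub_cancel_left]
  simp_rw [hinv, mul_sum, ← mul_assoc, ← pow_succ']
  rw [sum_comm]
  obtain _ | n := n
  · simp
  rw [sum_range_succ, sum_eq_zero fun s hs => ?_, zero_add]
  · simp [hpow]
  · rw [← sum_mul, hζ.sum_mul_pow_pow_eq_zero β s.succ_pos (by grind), zero_mul]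

end Field

/-- The recurrence `P k = ∑ i ∈ [1, n], C(n, i) m ^ (n - i) P (k - i)` in the forward indexing of
`LinearRecurrence`. -/
def binomialRecurrence {R : Type*} [CommSemiring R] (n : ℕ) (m : R) : LinearRecurrence R :=
  ⟨n, fun i => n.choose i * m ^ (i : ℕ)⟩

namespace binomialRecurrence

lemma isSolution_shift_of_forall_eq_sum {R : Type*} [CommRing R] {n : ℕ} (m : R) (P : ℤ → R)
    (hP : ∀ k : ℤ, 1 ≤ k → P k = ∑ j : Fin n,
      (n.choose ((j : ℕ) + 1) : R) * m ^ (n - 1 - (j : ℕ)) * P (k - ((j : ℕ) + 1))) :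
    (binomialRecurrence n m).IsSolution fun i => P (i + 1 - n) := by
  intro i
  show P ((i + n : ℕ) + 1 - n) = ∑ j : Fin n, n.choose j * m ^ (j : ℕ) * P ((i + j : ℕ) + 1 - n)
  rw [show ((i + n : ℕ) : ℤ) + 1 - n = i + 1 by push_cast; ring, hP _ (by omega),
    ← Equiv.sum_comp Fin.revPerm]
  refine sum_congr rfl fun j _ => ?_
  have hj := j.isLt
  simp only [Fin.revPerm_apply, Fin.val_rev]
  rw [show n - (j + 1) + 1 = n - j by omega, Nat.choose_symm hj.le,
    show n - 1 - (n - (j + 1)) = j by omega]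
  congr 2
  push_cast [Nat.cast_sub hj]
  ring

variable {K : Type*} [Field K] {n : ℕ} {ζ β m : K}

lemma isSolution_inv_sub_pow {u : K} (hu : u ^ n = m ^ n + 1) :
    (binomialRecurrence n m).IsSolution fun i => (u - m)⁻¹ ^ i := by
  have hum := sub_ne_zero_of_pow_eq_pow_add_one hu
  have hchar : ∑ i : Fin n, (n.choose i : K) * m ^ (i : ℕ) * (u - m)⁻¹ ^ (i : ℕ)
      = (u - m)⁻¹ ^ n := by
    have hbin := add_pow (m * (u - m)⁻¹) 1 n
    rw [sum_range_succ, ← Fin.sum_univ_eq_sum_range] at hbin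
    have hq : m * (u - m)⁻¹ + 1 = u * (u - m)⁻¹ := by field_simp; ring
    rw [hq, mul_pow, mul_pow, hu] at hbin
    simp only [one_pow, mul_one, Nat.choose_self, Nat.cast_one, mul_pow] at hbin
    calc _ = ∑ i : Fin n, m ^ (i : ℕ) * (u - m)⁻¹ ^ (i : ℕ) * (n.choose i : K) :=
          sum_congr rfl fun _ _ => by ring
      _ = _ := by linear_combination -hbin
  intro i
  simp only [binomialRecurrence, pow_add, ← hchar, mul_sum]
  exact sum_congr rfl fun j _ => by ring

/-- `fundamentalSol n ζ β m i` is `P (i + 1 - n)`; the weights come from the partial fractions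
`1 / (β ^ n - (m + t) ^ n) = ∑ j, β ζ ^ j / (n β ^ n (β ζ ^ j - m - t))` of the generating
function of `P`. -/
def fundamentalSol (n : ℕ) (ζ β m : K) (i : ℕ) : K :=
  ∑ j ∈ range n, β * ζ ^ j * (β * ζ ^ j - m) ^ (n - 2) / (n * β ^ n) * (β * ζ ^ j - m)⁻¹ ^ i

lemma fundamentalSol_isSolution (hζ : ζ ^ n = 1) (hβ : β ^ n = m ^ n + 1) :
    (binomialRecurrence n m).IsSolution (fundamentalSol n ζ β m) := by
  rw [LinearRecurrence.is_sol_iff_mem_solSpace]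
  have hsum : fundamentalSol n ζ β m = ∑ j ∈ range n,
      (β * ζ ^ j * (β * ζ ^ j - m) ^ (n - 2) / (n * β ^ n)) • fun i => (β * ζ ^ j - m)⁻¹ ^ i := by
    ext i
    simp [fundamentalSol, Finset.sum_apply]
  rw [hsum]
  refine Submodule.sum_mem _ fun j _ => Submodule.smul_mem _ _ ?_
  rw [← LinearRecurrence.is_sol_iff_mem_solSpace]
  exact isSolution_inv_sub_pow (by rw [mul_pow_pow_eq_pow hζ, hβ])

lemma fundamentalSol_of_lt [CharZero K] (hζ : IsPrimitiveRoot ζ n) (hβ : β ^ n = m ^ n + 1)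
    (hβ0 : β ≠ 0) (hn : 2 ≤ n) {i : ℕ} (hi : i < n) :
    fundamentalSol n ζ β m i = if i = n - 1 then 1 else 0 := by
  have hD : (n : K) * β ^ n ≠ 0 := mul_ne_zero (by simp; omega) (pow_ne_zero n hβ0)
  have hw := mul_pow_sub_ne_zero hζ.pow_eq_one hβ
  unfold fundamentalSol
  split_ifs with h
  · have hterm (j : ℕ) : β * ζ ^ j * (β * ζ ^ j - m) ^ (n - 2) / (n * β ^ n)
          * (β * ζ ^ j - m)⁻¹ ^ (n - 1) = β * ζ ^ j * (β * ζ ^ j - m)⁻¹ / (n * β ^ n) := by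
      have := hw j
      rw [show n - 1 = n - 2 + 1 by omega, pow_succ, inv_pow]
      field_simp
    simp_rw [h, hterm, ← sum_div, hζ.sum_mul_mul_sub_inv hβ, div_self hD]
  · have hterm (j : ℕ) : β * ζ ^ j * (β * ζ ^ j - m) ^ (n - 2) / (n * β ^ n)
          * (β * ζ ^ j - m)⁻¹ ^ i = β * ζ ^ j * (β * ζ ^ j - m) ^ (n - 2 - i) / (n * β ^ n) := by
      rw [pow_sub₀ _ (hw j) (show i ≤ n - 2 by omega), inv_pow]
      ring
    simp_rw [hterm, ← sum_div,
      hζ.sum_mul_mul_sub_pow_eq_zero β m (show n - 2 - i + 2 ≤ n by omega), zero_div]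

lemma tendsto_fundamentalSol_succ_div {ζ : ℂ} (hζ : IsPrimitiveRoot ζ n) (hn : 0 < n)
    {β m : ℝ} (hm : 0 < m) (hmβ : m < β) (hβ : β ^ n = m ^ n + 1) :
    Tendsto (fun i => fundamentalSol n ζ β m (i + 1) / fundamentalSol n ζ β m i) atTop
      (𝓝 ((β - m : ℂ)⁻¹)) := by
  have hw := mul_pow_sub_ne_zero (β := (β : ℂ)) (m := m) hζ.pow_eq_one (by exact_mod_cast hβ)
  have hβ0 : (β : ℂ) ≠ 0 := by exact_mod_cast (hm.trans hmβ).ne'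
  have hdom : ∀ j ∈ range n, j ≠ 0 →
      ‖((β : ℂ) * ζ ^ j - m)⁻¹‖ < ‖((β : ℂ) * ζ ^ 0 - m)⁻¹‖ := by
    intro j hj hj0
    rw [pow_zero, mul_one, norm_inv, norm_inv, inv_lt_inv₀ (norm_pos_iff.2 (hw j))
      (by simpa using hw 0), ← Complex.ofReal_sub, Complex.norm_real, Real.norm_eq_abs]
    exact abs_sub_lt_norm_mul_sub (hm.trans hmβ) hm
      (by rw [norm_pow, hζ.norm'_eq_one hn.ne', one_pow])
      (hζ.pow_ne_one_of_pos_of_lt hj0 (mem_range.1 hj))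
  have hc : (β : ℂ) * ζ ^ 0 * ((β : ℂ) * ζ ^ 0 - m) ^ (n - 2) / (n * (β : ℂ) ^ n) ≠ 0 :=
    div_ne_zero (mul_ne_zero (mul_ne_zero hβ0 (by simp)) (pow_ne_zero _ (hw 0)))
      (mul_ne_zero (by exact_mod_cast hn.ne') (pow_ne_zero _ hβ0))
  have h := tendsto_sum_mul_pow_succ_div_sum_mul_pow
    (fun j => (β : ℂ) * ζ ^ j * ((β : ℂ) * ζ ^ j - m) ^ (n - 2) / (n * (β : ℂ) ^ n)) _
    (mem_range.2 hn) hc (inv_ne_zero (hw 0)) hdom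
  rwa [pow_zero, mul_one] at h

end binomialRecurrence

/-- The rational truncations of the 1-periodic recurrent fraction of order `n` with
coefficients `a_1 = C(n,1) m^{n-1}, a_i = C(n,i) m^{n-i}` converge to the
`(n, m^n+1)`-form `m^{n-1} + m^{n-2}(m^n+1)^{1/n} + … + (m^n+1)^{(n-1)/n}`. -/
theorem recurrent_fraction_tendsto_form_plus
    (n : ℕ) (hn : 2 ≤ n) (m : ℝ) (hm : 0 < m)
    (P : ℤ → ℝ)
    (hP0 : P 0 = 1)
    (hPneg : ∀ k : ℤ, 1 - (n : ℤ) ≤ k → k < 0 → P k = 0)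
    (hPrec : ∀ k : ℤ, 1 ≤ k →
      P k = ∑ j : Fin n,
        (n.choose ((j : ℕ) + 1) : ℝ) * m ^ (n - 1 - (j : ℕ)) * P (k - ((j : ℕ) + 1))) :
    Tendsto (fun k : ℕ => P ((k : ℤ) + 1) / P (k : ℤ)) atTop
      (nhds (∑ i ∈ Finset.range n,
        m ^ (n - 1 - i) * ((m ^ n + 1) ^ ((1 : ℝ) / (n : ℝ))) ^ i)) := by
  set β := (m ^ n + 1) ^ ((1 : ℝ) / (n : ℝ))
  have hβ : β ^ n = m ^ n + 1 := by
    simp only [β, one_div]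
    exact Real.rpow_inv_natCast_pow (by positivity) (by omega)
  have hβℂ : (β : ℂ) ^ n = (m : ℂ) ^ n + 1 := by exact_mod_cast hβ
  have hmβ : m < β := lt_of_pow_lt_pow_left₀ n (by positivity) (by rw [hβ]; linarith)
  obtain ⟨ζ, hζ⟩ : ∃ ζ : ℂ, IsPrimitiveRoot ζ n := ⟨_, Complex.isPrimitiveRoot_exp n (by omega)⟩
  have hsol := binomialRecurrence.isSolution_shift_of_forall_eq_sum (m : ℂ) (fun k => (P k : ℂ))
    fun k hk => by rw [hPrec k hk]; push_cast; rfl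
  have hP : (fun i : ℕ => (P (i + 1 - n) : ℂ)) = binomialRecurrence.fundamentalSol n ζ β m := by
    rw [LinearRecurrence.eq_iff_eqOn_range_order _ _ _ hsol
      (binomialRecurrence.fundamentalSol_isSolution hζ.pow_eq_one hβℂ)]
    intro i hi
    replace hi : i < n := mem_range.1 hi
    rw [binomialRecurrence.fundamentalSol_of_lt hζ hβℂ (by exact_mod_cast (hm.trans hmβ).ne') hn
      hi]
    split_ifs with h
    · simp [h, Nat.cast_sub (by omega : 1 ≤ n), hP0]
    · simp [hPneg (i + 1 - n) (by omega) (by omega)]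
  rw [sum_range_pow_mul_pow_eq_inv_sub hβ, ← tendsto_ofReal_iff]
  push_cast
  refine ((binomialRecurrence.tendsto_fundamentalSol_succ_div hζ (by omega) hm hmβ hβ).comp
    (tendsto_add_atTop_nat (n - 1))).congr fun k => ?_
  simp only [Function.comp, ← hP]
  push_cast
  congr 3 <;> omega
end

section
/- For every integer n ≥ 2 and every integer m, the determinant of the (m^n−1)-twisted circulant matrix X(n, m^n−1, s) with s_i = m^{n−1−i} for i = 0, …, n−1 (i.e. s = (m^{n−1}, m^{n−2}, …, m, 1)) equals 1. -/
/-- The `M`-twisted circulant matrix `X(n, M, s)`: the `n × n` matrix whose `(i, j)`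
entry equals `s (i - j)` if `j ≤ i` and `M * s (n + i - j)` if `j > i`. -/
def twistedCirc {R : Type*} [CommRing R] (n : ℕ) (M : R) (s : ℕ → R) :
    Matrix (Fin n) (Fin n) R :=
  Matrix.of fun i j =>
    if (j : ℕ) ≤ (i : ℕ) then s ((i : ℕ) - (j : ℕ)) else M * s (n + (i : ℕ) - (j : ℕ))

/-!
More generally `det X(n, M, (m^{n-1}, …, m, 1)) = (m^n - M)^{n-1}`, and `m^n - M = 1` here.
Let `S` be the superdiagonal shift, so that `(1 - m • S) * X` replaces row `i` of `X` by
`row i - m • row (i+1)`. Since `s i = m * s (i + 1)`, this reduces every row but the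
last to a single entry `M - m^n` just right of the diagonal; the last row is `(1, m, …, m^{n-1})`.
As `1 - m • S` is unitriangular, expanding along the first column gives
`det X = (-1)^{n-1} (M - m^n)^{n-1} = (m^n - M)^{n-1}`.
-/

open Matrix

def upShift (R : Type*) [CommRing R] (n : ℕ) : Matrix (Fin n) (Fin n) R :=
  of fun i j => if (j : ℕ) = i + 1 then 1 else 0

section

variable {R : Type*} [CommRing R]

lemma upShift_mul_apply_castSucc {k : ℕ} (A : Matrix (Fin (k + 1)) (Fin (k + 1)) R)
    (i : Fin k) (j : Fin (k + 1)) : (upShift R (k + 1) * A) i.castSucc j = A i.succ j := by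
  rw [mul_apply, Finset.sum_eq_single i.succ]
  · simp [upShift]
  · intro l _ hl
    have : (l : ℕ) ≠ i + 1 := fun h => hl (Fin.ext h)
    simp [upShift, this]
  · simp

lemma upShift_mul_apply_last {k : ℕ} (A : Matrix (Fin (k + 1)) (Fin (k + 1)) R)
    (j : Fin (k + 1)) : (upShift R (k + 1) * A) (Fin.last k) j = 0 := by
  refine (mul_apply ..).trans (Finset.sum_eq_zero fun l _ => ?_)
  have : (l : ℕ) ≠ k + 1 := l.isLt.ne
  simp [upShift, this]

lemma det_one_sub_smul_upShift (n : ℕ) (m : R) : (1 - m • upShift R n).det = 1 := by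
  rw [det_of_isUpperTriangular]
  · simp [upShift]
  · intro i j hij
    have hne : i ≠ j := hij.ne'
    have : (j : ℕ) ≠ i + 1 := by have : (j : ℕ) < i := hij; omega
    simp [upShift, one_apply_ne hne, this]

lemma twistedCirc_geometric_apply_last (k : ℕ) (M m : R) (j : Fin (k + 1)) :
    twistedCirc (k + 1) M (fun i => m ^ (k - i)) (Fin.last k) j = m ^ (j : ℕ) := by
  have hj : (j : ℕ) ≤ k := Fin.is_le j
  simp [twistedCirc, Fin.le_last, Nat.sub_sub_self hj]

lemma twistedCirc_geometric_apply_castSucc_sub (k : ℕ) (M m : R) (i : Fin k)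
    (j : Fin (k + 1)) :
    twistedCirc (k + 1) M (fun i => m ^ (k - i)) i.castSucc j
      - m * twistedCirc (k + 1) M (fun i => m ^ (k - i)) i.succ j
      = if (j : ℕ) = i + 1 then M - m ^ (k + 1) else 0 := by
  have hi : (i : ℕ) < k := i.isLt
  have hj : (j : ℕ) ≤ k := Fin.is_le j
  simp only [twistedCirc, of_apply, Fin.val_castSucc, Fin.val_succ]
  rcases lt_trichotomy (j : ℕ) (i + 1) with hlt | heq | hgt
  · rw [if_pos (by omega), if_pos (by omega), if_neg (by omega),
      show k - (i - j) = k - (i + 1 - j) + 1 by omega, pow_succ]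
    ring
  · rw [if_neg (by omega), if_pos (by omega), if_pos heq,
      show k - (k + 1 + i - j) = 0 by omega, show k - (i + 1 - j) = k by omega, pow_succ]
    ring
  · rw [if_neg (by omega), if_neg (by omega), if_neg (by omega),
      show k - (k + 1 + i - j) = k - (k + 1 + (i + 1) - j) + 1 by omega, pow_succ]
    ring

theorem det_twistedCirc_geometric (n : ℕ) (M m : R) :
    (twistedCirc n M fun i => m ^ (n - 1 - i)).det = (m ^ n - M) ^ (n - 1) := by
  cases n with
  | zero => simp
  | succ k =>
    set B := (1 - m • upShift R (k + 1)) * twistedCirc (k + 1) M (fun i => m ^ (k - i))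
    have hB_castSucc (i : Fin k) (j : Fin (k + 1)) :
        B i.castSucc j = if (j : ℕ) = i + 1 then M - m ^ (k + 1) else 0 := by
      rw [← twistedCirc_geometric_apply_castSucc_sub]
      simp [B, sub_mul, upShift_mul_apply_castSucc]
    have hB_last (j : Fin (k + 1)) : B (Fin.last k) j = m ^ (j : ℕ) := by
      simp [B, sub_mul, upShift_mul_apply_last, twistedCirc_geometric_apply_last]
    have hminor : B.submatrix Fin.castSucc Fin.succ = diagonal fun _ => M - m ^ (k + 1) := by
      ext a b
      simp [hB_castSucc, diagonal_apply, Fin.ext_iff, eq_comm]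
    have hdet : B.det = (m ^ (k + 1) - M) ^ k := by
      rw [det_succ_column_zero, Fin.sum_univ_castSucc, Fin.succAbove_last, hminor]
      simp [hB_castSucc, hB_last, ← mul_pow]
    simpa [B, det_mul, det_one_sub_smul_upShift] using hdet

end

theorem det_twistedCirc_pow_minus_one_general (n : ℕ) (m : ℤ) :
    (twistedCirc n (m ^ n - 1) (fun i => m ^ (n - 1 - i))).det = 1 := by
  rw [det_twistedCirc_geometric, sub_sub_cancel, one_pow]

/-- `(m^{n-1}, m^{n-2}, …, m, 1)` solves `|F(n, m^n - 1)| = 1`. -/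
theorem det_twistedCirc_pow_minus_one (n : ℕ) (hn : 2 ≤ n) (m : ℤ) :
    (twistedCirc n (m ^ n - 1) (fun i => m ^ (n - 1 - i))).det = 1 :=
  det_twistedCirc_pow_minus_one_general n m
end

section
/- For every integer n ≥ 2 and every integer m, the determinant of the (m^{2n−1}+1)-twisted circulant matrix X(2n−1, m^{2n−1}+1, s) with s_i = m^{2n−2−i} for i = 0, …, 2n−2 (i.e. s = (m^{2n−2}, m^{2n−3}, …, m, 1)) equals 1. -/
namespace TwistedCirc

variable {R : Type*} [CommRing R]

def superdiag (N : ℕ) : Matrix (Fin N) (Fin N) R :=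
  Matrix.of fun i j => if (j : ℕ) = i + 1 then 1 else 0

lemma det_one_sub_smul_superdiag (N : ℕ) (m : R) :
    (1 - m • superdiag N : Matrix (Fin N) (Fin N) R).det = 1 := by
  rw [Matrix.det_of_isUpperTriangular]
  · simp [superdiag]
  · intro i j hji
    have : (j : ℕ) < i := hji
    simp [superdiag, Fin.ext_iff, this.ne', show (j : ℕ) ≠ i + 1 by omega]

lemma superdiag_mul_apply {N : ℕ} (A : Matrix (Fin N) (Fin N) R) (i j : Fin N) :
    (superdiag N * A : Matrix (Fin N) (Fin N) R) i j =
      if h : (i : ℕ) + 1 < N then A ⟨i + 1, h⟩ j else 0 := by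
  split_ifs with h
  · rw [Matrix.mul_apply, Finset.sum_eq_single ⟨i + 1, h⟩]
    · simp [superdiag]
    · intro k _ hk
      simp [superdiag, show (k : ℕ) ≠ i + 1 from fun h => hk (Fin.ext h)]
    · simp
  · rw [Matrix.mul_apply]
    refine Finset.sum_eq_zero fun k _ => ?_
    simp [superdiag, show (k : ℕ) ≠ i + 1 by omega]

def superdiagWithPowRow (N : ℕ) (m : R) : Matrix (Fin (N + 1)) (Fin (N + 1)) R :=
  Matrix.of fun i j => if (i : ℕ) = N then m ^ (j : ℕ) else superdiag (N + 1) i j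

lemma det_superdiagWithPowRow (N : ℕ) (m : R) : (superdiagWithPowRow N m).det = (-1) ^ N := by
  rw [Matrix.det_succ_column_zero, Fin.sum_univ_succAbove _ (Fin.last N)]
  have hminor : (superdiagWithPowRow N m).submatrix (Fin.last N).succAbove Fin.succ = 1 := by
    ext i j
    simp only [Matrix.submatrix_apply, Fin.succAbove_last, superdiagWithPowRow, superdiag,
      Matrix.of_apply, Fin.val_castSucc, Fin.val_succ, add_left_inj, Matrix.one_apply, Fin.ext_iff]
    rw [if_neg i.isLt.ne]
    simp only [eq_comm]
  have hcol : ∀ i : Fin N, superdiagWithPowRow N m ((Fin.last N).succAbove i) 0 = 0 := by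
    intro i
    simp [superdiagWithPowRow, superdiag, i.isLt.ne]
  rw [Fintype.sum_eq_zero _ fun i => by rw [hcol, mul_zero, zero_mul], add_zero, hminor]
  simp [superdiagWithPowRow]

lemma twistedCirc_pow_apply (N : ℕ) (m : R) (i j : Fin (N + 1)) :
    twistedCirc (N + 1) (m ^ (N + 1) + 1) (fun k => m ^ (N - k)) i j =
      if (j : ℕ) ≤ i then m ^ (N + j - i) else (m ^ (N + 1) + 1) * m ^ ((j : ℕ) - i - 1) := by
  have := i.isLt
  simp only [twistedCirc, Matrix.of_apply]
  split_ifs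
  · congr 1
    omega
  · congr 2
    omega

lemma one_sub_smul_superdiag_mul_twistedCirc (N : ℕ) (m : R) :
    (1 - m • superdiag (N + 1)) * twistedCirc (N + 1) (m ^ (N + 1) + 1) (fun k => m ^ (N - k)) =
      superdiagWithPowRow N m := by
  ext i j
  rw [sub_mul, one_mul, Matrix.sub_apply, Matrix.smul_mul, Matrix.smul_apply, superdiag_mul_apply,
    smul_eq_mul]
  simp only [superdiagWithPowRow, superdiag, Matrix.of_apply]
  by_cases hi : (i : ℕ) = N
  · have hj : (j : ℕ) ≤ i := by omega
    rw [dif_neg (by omega), mul_zero, sub_zero, if_pos hi, twistedCirc_pow_apply, if_pos hj]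
    congr 1
    omega
  · rw [dif_pos (by omega), if_neg hi, twistedCirc_pow_apply, twistedCirc_pow_apply]
    dsimp only
    rcases lt_trichotomy (j : ℕ) (i + 1) with hj | hj | hj
    · rw [if_pos (by omega), if_pos (by omega), if_neg (by omega),
        show N + j - i = N + j - (i + 1) + 1 by omega, pow_succ]
      ring
    · rw [if_neg (by omega), if_pos (by omega), if_pos hj, hj,
        show (i : ℕ) + 1 - i - 1 = 0 by omega, show N + (i + 1) - (i + 1) = N by omega]
      ring
    · rw [if_neg (by omega), if_neg (by omega), if_neg (by omega),
        show (j : ℕ) - i - 1 = j - (i + 1) - 1 + 1 by omega, pow_succ]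
      ring

theorem det_twistedCirc_pow_add_one (N : ℕ) (m : R) :
    (twistedCirc (N + 1) (m ^ (N + 1) + 1) (fun i => m ^ (N - i))).det = (-1) ^ N := by
  have h := congrArg Matrix.det (one_sub_smul_superdiag_mul_twistedCirc N m)
  rwa [Matrix.det_mul, det_one_sub_smul_superdiag, one_mul, det_superdiagWithPowRow] at h

end TwistedCirc

theorem det_twistedCirc_odd_pow_plus_one_general (n : ℕ) (m : ℤ) :
    (twistedCirc (2 * n - 1) (m ^ (2 * n - 1) + 1) (fun i => m ^ (2 * n - 2 - i))).det = 1 := by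
  obtain _ | k := n
  · exact Matrix.det_fin_zero
  · have hsize : 2 * (k + 1) - 1 = 2 * k + 1 := by omega
    have hexp : 2 * (k + 1) - 2 = 2 * k := by omega
    rw [hsize, hexp, TwistedCirc.det_twistedCirc_pow_add_one, (even_two_mul k).neg_one_pow]

/-- `(m^{2n-2}, m^{2n-3}, …, m, 1)` solves `|F(2n-1, m^{2n-1} + 1)| = 1`. -/
theorem det_twistedCirc_odd_pow_plus_one (n : ℕ) (hn : 2 ≤ n) (m : ℤ) :
    (twistedCirc (2 * n - 1) (m ^ (2 * n - 1) + 1) (fun i => m ^ (2 * n - 2 - i))).det = 1 :=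
  det_twistedCirc_odd_pow_plus_one_general n m
end

section
/- For every integer n ≥ 1 and every integer m, the determinant of the (m^{2n}+1)-twisted circulant matrix X(2n, m^{2n}+1, s) with s_i = m^{2n−1−i} for i = 0, …, 2n−1 (i.e. s = (m^{2n−1}, m^{2n−2}, …, m, 1)) equals −1. -/
open Matrix

variable {R : Type*} [CommRing R]

def subSMulNextRow (K : ℕ) (m : R) : Matrix (Fin (K + 1)) (Fin (K + 1)) R :=
  of fun i j => if j = i then 1 else if (j : ℕ) = i + 1 then -m else 0

lemma det_subSMulNextRow (K : ℕ) (m : R) : (subSMulNextRow K m).det = 1 := by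
  rw [det_of_isUpperTriangular]
  · simp [subSMulNextRow]
  · intro i j (hji : j < i)
    rw [Fin.lt_def] at hji
    simp only [subSMulNextRow, of_apply, Fin.ext_iff]
    rw [if_neg (by omega), if_neg (by omega)]

lemma subSMulNextRow_mul_apply_castSucc {K : ℕ} (m : R) (X : Matrix (Fin (K + 1)) (Fin (K + 1)) R)
    (i : Fin K) (j : Fin (K + 1)) :
    (subSMulNextRow K m * X) i.castSucc j = X i.castSucc j - m * X i.succ j := by
  rw [mul_apply, Fintype.sum_eq_add i.castSucc i.succ Fin.castSucc_lt_succ.ne]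
  · simp [subSMulNextRow, Fin.castSucc_lt_succ.ne', sub_eq_add_neg]
  · rintro k ⟨hk, hk'⟩
    have : (k : ℕ) ≠ i + 1 := fun h => hk' (Fin.ext h)
    simp [subSMulNextRow, hk, this]

lemma subSMulNextRow_mul_apply_last {K : ℕ} (m : R) (X : Matrix (Fin (K + 1)) (Fin (K + 1)) R)
    (j : Fin (K + 1)) :
    (subSMulNextRow K m * X) (Fin.last K) j = X (Fin.last K) j := by
  rw [mul_apply, Fintype.sum_eq_single (Fin.last K)]
  · simp [subSMulNextRow]
  · intro k hk
    have : (k : ℕ) ≠ K + 1 := k.isLt.ne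
    simp [subSMulNextRow, hk, this]

lemma det_updateRow_zero_smul_one {K : ℕ} (c : R) (v : Fin (K + 1) → R) :
    ((c • 1 : Matrix (Fin (K + 1)) (Fin (K + 1)) R).updateRow 0 v).det = v 0 * c ^ K := by
  rw [det_of_isUpperTriangular, Fin.prod_univ_succ]
  · simp
  · intro i j (hji : j < i)
    have hi : i ≠ 0 := (j.zero_le.trans_lt hji).ne'
    simp [updateRow_ne hi, one_apply_ne hji.ne']

lemma twistedCirc_geom_apply_castSucc_sub {K : ℕ} (M m : R) (i : Fin K) (j : Fin (K + 1)) :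
    twistedCirc (K + 1) M (fun k => m ^ (K - k)) i.castSucc j -
        m * twistedCirc (K + 1) M (fun k => m ^ (K - k)) i.succ j =
      if i.succ = j then M - m ^ (K + 1) else 0 := by
  simp only [twistedCirc, of_apply, Fin.val_castSucc, Fin.val_succ, Fin.ext_iff]
  have hj := j.isLt
  rcases lt_trichotomy (j : ℕ) (i + 1) with hlt | heq | hgt
  · rw [if_pos (by omega), if_pos (by omega), if_neg (by omega),
      show K - (i - j) = K - (i + 1 - j) + 1 by omega, pow_succ]
    ring
  · rw [if_neg (by omega), if_pos (by omega), if_pos heq.symm,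
      show K - (K + 1 + i - j) = 0 by omega, show K - (i + 1 - j) = K by omega, pow_succ]
    ring
  · rw [if_neg (by omega), if_neg (by omega), if_neg (by omega),
      show K - (K + 1 + i - j) = K - (K + 1 + (i + 1) - j) + 1 by omega, pow_succ]
    ring

lemma twistedCirc_geom_apply_last {K : ℕ} (M m : R) (j : Fin (K + 1)) :
    twistedCirc (K + 1) M (fun k => m ^ (K - k)) (Fin.last K) j = m ^ (j : ℕ) := by
  have hj : (j : ℕ) ≤ K := Fin.is_le j
  simp only [twistedCirc, of_apply, Fin.val_last, if_pos hj, Nat.sub_sub_self hj]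

lemma subSMulNextRow_mul_twistedCirc_geom (K : ℕ) (M m : R) :
    subSMulNextRow K m * twistedCirc (K + 1) M (fun k => m ^ (K - k)) =
      (((M - m ^ (K + 1)) • 1 : Matrix (Fin (K + 1)) (Fin (K + 1)) R).updateRow 0
        fun j => m ^ (j : ℕ)).submatrix (finRotate (K + 1)) id := by
  ext i j
  induction i using Fin.lastCases with
  | last =>
    rw [subSMulNextRow_mul_apply_last, twistedCirc_geom_apply_last]
    simp
  | cast i =>
    rw [subSMulNextRow_mul_apply_castSucc, twistedCirc_geom_apply_castSucc_sub]
    simp [Fin.coeSucc_eq_succ, one_apply]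

theorem det_twistedCirc_geom (K : ℕ) (M m : R) :
    (twistedCirc (K + 1) M (fun k => m ^ (K - k))).det = (-1) ^ K * (M - m ^ (K + 1)) ^ K := by
  have h := congrArg det (subSMulNextRow_mul_twistedCirc_geom K M m)
  rw [det_mul, det_subSMulNextRow, one_mul, det_permute, sign_finRotate,
    det_updateRow_zero_smul_one] at h
  simpa using h

/-- `(m^{2n-1}, m^{2n-2}, …, m, 1)` solves `|F(2n, m^{2n} + 1)| = -1`. -/
theorem det_twistedCirc_even_pow_plus_one (n : ℕ) (hn : 1 ≤ n) (m : ℤ) :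
    (twistedCirc (2 * n) (m ^ (2 * n) + 1) (fun i => m ^ (2 * n - 1 - i))).det = -1 := by
  have h := det_twistedCirc_geom (2 * n - 1) (m ^ (2 * n) + 1) m
  rwa [show 2 * n - 1 + 1 = 2 * n by omega, add_sub_cancel_left, one_pow, mul_one,
    (show Odd (2 * n - 1) from ⟨n - 1, by omega⟩).neg_one_pow] at h
end

section
/- Let k and n be rational numbers with n ≠ 0, and set p = k²n. If m = (k/n)(p − 3), s_0 = (p−2)(p−1) − 1, s_1 = kn(p−2), and s_2 = n(p−1), then s_0³ + m s_1³ + m² s_2³ − 3 m s_0 s_1 s_2 = 1; that is, (s_0, s_1, s_2) solves the generalized Pell equation |F(3,m)| = 1. -/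
/-!
Every term of the norm form that involves `m` carries at least as many factors `n` as factors `m`,
so after clearing denominators it only depends on `m n = k (p - 3)` and `k² n = p`. Substituting
these turns the norm into a polynomial in `p` alone, which is identically `1`.
-/

theorem pell3_norm_poly_eq_one {R : Type*} [CommRing R] (p : R) :
    ((p - 2) * (p - 1) - 1) ^ 3 + p ^ 2 * (p - 3) * (p - 2) ^ 3 + p * (p - 3) ^ 2 * (p - 1) ^ 3
      - 3 * p * (p - 3) * (p - 2) * (p - 1) * ((p - 2) * (p - 1) - 1) = 1 := by
  ring

theorem pell3_norm_eq_one_of_mul_eq {R : Type*} [CommRing R] {k n p m : R}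
    (hp : p = k ^ 2 * n) (hm : m * n = k * (p - 3)) :
    ((p - 2) * (p - 1) - 1) ^ 3 + m * (k * n * (p - 2)) ^ 3 + m ^ 2 * (n * (p - 1)) ^ 3
      - 3 * m * ((p - 2) * (p - 1) - 1) * (k * n * (p - 2)) * (n * (p - 1)) = 1 := by
  have h₁ : m * (k * n * (p - 2)) ^ 3 = p ^ 2 * (p - 3) * (p - 2) ^ 3 := by
    linear_combination k ^ 3 * n ^ 2 * (p - 2) ^ 3 * hm - (k ^ 2 * n + p) * (p - 3) * (p - 2) ^ 3 * hp
  have h₂ : m ^ 2 * (n * (p - 1)) ^ 3 = p * (p - 3) ^ 2 * (p - 1) ^ 3 := by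
    linear_combination n * (p - 1) ^ 3 * (m * n + k * (p - 3)) * hm - (p - 3) ^ 2 * (p - 1) ^ 3 * hp
  have h₃ : 3 * m * ((p - 2) * (p - 1) - 1) * (k * n * (p - 2)) * (n * (p - 1))
      = 3 * p * (p - 3) * (p - 2) * (p - 1) * ((p - 2) * (p - 1) - 1) := by
    linear_combination 3 * k * n * (p - 2) * (p - 1) * ((p - 2) * (p - 1) - 1) * hm
      - 3 * (p - 3) * (p - 2) * (p - 1) * ((p - 2) * (p - 1) - 1) * hp
  rw [h₁, h₂, h₃]
  exact pell3_norm_poly_eq_one p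

/-- Parametrized solutions of the generalized Pell equation `|F(3,m)| = 1`:
with `p = k²n`, `m = (k/n)(p - 3)`, `s₀ = (p-2)(p-1) - 1`, `s₁ = kn(p-2)`,
`s₂ = n(p-1)` one has `s₀³ + m s₁³ + m² s₂³ - 3 m s₀ s₁ s₂ = 1`. -/
theorem pell3_parametrization_minus
    (k n : ℚ) (hn : n ≠ 0) (p m s₀ s₁ s₂ : ℚ)
    (hp : p = k ^ 2 * n)
    (hm : m = (k / n) * (p - 3))
    (hs₀ : s₀ = (p - 2) * (p - 1) - 1)
    (hs₁ : s₁ = k * n * (p - 2))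
    (hs₂ : s₂ = n * (p - 1)) :
    s₀ ^ 3 + m * s₁ ^ 3 + m ^ 2 * s₂ ^ 3 - 3 * m * s₀ * s₁ * s₂ = 1 := by
  have hmn : m * n = k * (p - 3) := by
    rw [hm]
    field_simp
  subst hs₀ hs₁ hs₂
  exact pell3_norm_eq_one_of_mul_eq hp hmn
end

section
/- Let k and n be rational numbers with n ≠ 0, and set p = k²n. If m = (k/n)(p + 3), s_0 = (p+2)(p+1) − 1, s_1 = kn(p+2), and s_2 = n(p+1), then s_0³ + m s_1³ + m² s_2³ − 3 m s_0 s_1 s_2 = 1; that is, (s_0, s_1, s_2) solves the generalized Pell equation |F(3,m)| = 1. -/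
theorem pell3_parametrization_plus_general
    (k n : ℚ) (p m s₀ s₁ s₂ : ℚ)
    (hp : p = k ^ 2 * n)
    (hm : m = (k / n) * (p + 3))
    (hs₀ : s₀ = (p + 2) * (p + 1) - 1)
    (hs₁ : s₁ = k * n * (p + 2))
    (hs₂ : s₂ = n * (p + 1)) :
    s₀ ^ 3 + m * s₁ ^ 3 + m ^ 2 * s₂ ^ 3 - 3 * m * s₀ * s₁ * s₂ = 1 := by
  subst hp hm hs₀ hs₁ hs₂
  field_simp
  ring

/-- Parametrized solutions of the generalized Pell equation `|F(3,m)| = 1`: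
with `p = k²n`, `m = (k/n)(p + 3)`, `s₀ = (p+2)(p+1) - 1`, `s₁ = kn(p+2)`,
`s₂ = n(p+1)` one has `s₀³ + m s₁³ + m² s₂³ - 3 m s₀ s₁ s₂ = 1`. -/
theorem pell3_parametrization_plus
    (k n : ℚ) (hn : n ≠ 0) (p m s₀ s₁ s₂ : ℚ)
    (hp : p = k ^ 2 * n)
    (hm : m = (k / n) * (p + 3))
    (hs₀ : s₀ = (p + 2) * (p + 1) - 1)
    (hs₁ : s₁ = k * n * (p + 2))
    (hs₂ : s₂ = n * (p + 1)) :
    s₀ ^ 3 + m * s₁ ^ 3 + m ^ 2 * s₂ ^ 3 - 3 * m * s₀ * s₁ * s₂ = 1 :=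
  pell3_parametrization_plus_general k n p m s₀ s₁ s₂ hp hm hs₀ hs₁ hs₂
end

section
/- Let k and n be rational numbers with n ≠ 0, and set p = k²n. If m = (k/n)(p − 3), s_0 = 1, s_1 = −nk, and s_2 = n, then s_0³ + m s_1³ + m² s_2³ − 3 m s_0 s_1 s_2 = 1; likewise, if m = (k/n)(p + 3), s_0 = 1, s_1 = nk, and s_2 = −n, then s_0³ + m s_1³ + m² s_2³ − 3 m s_0 s_1 s_2 = 1 (these are the conjugate solutions of |F(3,m)| = 1). -/
/-! The form `1 - nk·θ + n·θ²` with `θ³ = m` has norm `1 + m n² (m n - k³ n + 3k)`, and the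
choice `m = (k/n)(k²n - 3)` makes the last factor vanish. The conjugate solution is the same one
with `n` replaced by `-n`. -/

/-- The norm of `s₀ + s₁ θ + s₂ θ²` in `R[θ]/(θ³ - m)`. -/
def cubicFormNorm {R : Type*} [CommRing R] (m s₀ s₁ s₂ : R) : R :=
  s₀ ^ 3 + m * s₁ ^ 3 + m ^ 2 * s₂ ^ 3 - 3 * m * s₀ * s₁ * s₂

theorem cubicFormNorm_one_neg_mul {R : Type*} [CommRing R] (m n k : R) :
    cubicFormNorm m 1 (-(n * k)) n = 1 + m * n ^ 2 * (m * n - k ^ 3 * n + 3 * k) := by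
  unfold cubicFormNorm
  ring

section Field

variable {K : Type*} [Field K]

theorem cubicFormNorm_eq_one_of_sub (k n : K) :
    cubicFormNorm (k / n * (k ^ 2 * n - 3)) 1 (-(n * k)) n = 1 := by
  rw [cubicFormNorm_one_neg_mul]
  rcases eq_or_ne n 0 with rfl | hn
  · simp
  · have hmn : k / n * (k ^ 2 * n - 3) * n = k * (k ^ 2 * n - 3) := by field_simp
    rw [hmn]
    ring

theorem cubicFormNorm_eq_one_of_add (k n : K) :
    cubicFormNorm (k / n * (k ^ 2 * n + 3)) 1 (n * k) (-n) = 1 := by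
  convert cubicFormNorm_eq_one_of_sub k (-n) using 2 <;> ring

end Field

theorem pell3_conjugate_solutions_general
    (k n : ℚ) (p : ℚ) (hp : p = k ^ 2 * n) :
    ((1 : ℚ) ^ 3 + ((k / n) * (p - 3)) * (-(n * k)) ^ 3
        + ((k / n) * (p - 3)) ^ 2 * n ^ 3
        - 3 * ((k / n) * (p - 3)) * 1 * (-(n * k)) * n = 1) ∧
      ((1 : ℚ) ^ 3 + ((k / n) * (p + 3)) * (n * k) ^ 3
        + ((k / n) * (p + 3)) ^ 2 * (-n) ^ 3
        - 3 * ((k / n) * (p + 3)) * 1 * (n * k) * (-n) = 1) := by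
  subst hp
  exact ⟨cubicFormNorm_eq_one_of_sub k n, cubicFormNorm_eq_one_of_add k n⟩

/-- Conjugate solutions of the generalized Pell equation `|F(3,m)| = 1`: with
`p = k²n`, both `(m, s₀, s₁, s₂) = ((k/n)(p-3), 1, -nk, n)` and
`(m, s₀, s₁, s₂) = ((k/n)(p+3), 1, nk, -n)` satisfy
`s₀³ + m s₁³ + m² s₂³ - 3 m s₀ s₁ s₂ = 1`. -/
theorem pell3_conjugate_solutions
    (k n : ℚ) (hn : n ≠ 0) (p : ℚ) (hp : p = k ^ 2 * n) :
    ((1 : ℚ) ^ 3 + ((k / n) * (p - 3)) * (-(n * k)) ^ 3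
        + ((k / n) * (p - 3)) ^ 2 * n ^ 3
        - 3 * ((k / n) * (p - 3)) * 1 * (-(n * k)) * n = 1) ∧
      ((1 : ℚ) ^ 3 + ((k / n) * (p + 3)) * (n * k) ^ 3
        + ((k / n) * (p + 3)) ^ 2 * (-n) ^ 3
        - 3 * ((k / n) * (p + 3)) * 1 * (n * k) * (-n) = 1) :=
  pell3_conjugate_solutions_general k n p hp
end
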